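/- (Lumpability, sufficiency) If a row-stochastic mutation matrix M on finite type space T and a survival function ρ are both constant on the fibers of a surjection π : T → T' — i.e., whenever π(τ_i) = π(τ_k), ρ(τ_i) = ρ(τ_k) and for every macro-type T'' the sums Σ_{τ_j : π(τ_j)=T''} M(τ_i, τ_j) and Σ_{τ_l : π(τ_l)=T''} M(τ_k, τ_l) agree — then the pushforward of one discrete ROM update step equals the ROM update step of the pushforward: coarse-graining commutes with the dynamics (assuming unit weights and nonzero normalization). -/
import Mathlib


open Finset

theorem lumpability_sufficiency
    (T T' : Type*) [Fintype T] [Fintype T'] [DecidableEq T']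
    (π : T → T') (hπ : Function.Surjective π)
    (M : T → T → ℝ) (hMnn : ∀ τ' τ, 0 ≤ M τ' τ)
    (hMrow : ∀ τ', ∑ τ, M τ' τ = 1)
    (ρ : T → ℝ) (hρ : ∀ τ, 0 < ρ τ)
    (hρconst : ∀ τi τk, π τi = π τk → ρ τi = ρ τk)
    (hMlump : ∀ τi τk, π τi = π τk → ∀ S : T',
        ∑ τj ∈ univ.filter (fun τj => π τj = S), M τi τj =
          ∑ τl ∈ univ.filter (fun τl => π τl = S), M τk τl)
    (p : T → ℝ) (hp : ∀ τ, 0 ≤ p τ) :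
    ∀ S : T',
      ∑ τ ∈ univ.filter (fun τ => π τ = S), (∑ τ', p τ' * ρ τ' * M τ' τ) =
        ∑ S' : T',
          (∑ τ ∈ univ.filter (fun τ => π τ = S'), p τ) *
            ρ (Function.surjInv hπ S') *
            (∑ τ ∈ univ.filter (fun τ => π τ = S), M (Function.surjInv hπ S') τ) := by
  intro S
  rw [Finset.sum_comm]
  rw [show (∑ τ' : T, ∑ τ ∈ univ.filter (fun τ => π τ = S), p τ' * ρ τ' * M τ' τ)
      = ∑ S' : T', ∑ τ' ∈ univ.filter (fun τ => π τ = S'),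
          ∑ τ ∈ univ.filter (fun τ => π τ = S), p τ' * ρ τ' * M τ' τ from
    (Finset.sum_fiberwise univ π _).symm]
  refine Finset.sum_congr rfl fun S' _ => ?_
  rw [Finset.sum_mul, Finset.sum_mul]
  refine Finset.sum_congr rfl fun τ' hτ' => ?_
  simp only [Finset.mem_filter] at hτ'
  have hπeq : π τ' = π (Function.surjInv hπ S') := by
    rw [Function.surjInv_eq hπ S', hτ'.2]
  rw [← Finset.mul_sum, hρconst τ' _ hπeq, hMlump τ' _ hπeq S, mul_assoc]
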